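/- arXiv:0909.4512 — 6 statements merged into one kernel-verified Lean document; each statement's English description precedes it below -/
import Mathlib

section
/- Let V be a 2-dimensional real vector space and let u₀, u₁, u₂ ∈ V be pairwise linearly independent vectors. Then there exists a lattice (a ℤ-submodule spanned by a basis of V) containing u₀, u₁, u₂ if and only if there exist nonzero integers n₀, n₁, n₂ such that n₀·u₀ + n₁·u₁ + n₂·u₂ = 0. -/
/-!
A lattice is the ℤ-span of two vectors, so by the rank bound over ℤ any three of its vectors
satisfy a nontrivial integer relation, and pairwise independence forces all three coefficients
to be nonzero. Conversely, from `n₀ • u₀ + n₁ • u₁ + n₂ • u₂ = 0` with `n₂ ≠ 0`, the basis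
`(u₀ / n₂, u₁ / n₂)` spans a lattice containing `u₀`, `u₁` and `u₂ = -n₀ (u₀ / n₂) - n₁ (u₁ / n₂)`.
-/

open Submodule Set

theorem exists_int_relation_of_mem_span_int {V ι : Type*} [AddCommGroup V] [Fintype ι]
    (hι : Fintype.card ι < 3) (b : ι → V) {u₀ u₁ u₂ : V} (h₀ : u₀ ∈ span ℤ (range b))
    (h₁ : u₁ ∈ span ℤ (range b)) (h₂ : u₂ ∈ span ℤ (range b)) :
    ∃ n₀ n₁ n₂ : ℤ, ¬(n₀ = 0 ∧ n₁ = 0 ∧ n₂ = 0) ∧ n₀ • u₀ + n₁ • u₁ + n₂ • u₂ = 0 := by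
  classical
  have hdep : ¬LinearIndependent ℤ ![u₀, u₁, u₂] := fun hli => by
    have hle := linearIndependent_le_span' _ hli (range b) <| by
      rintro _ ⟨i, rfl⟩
      fin_cases i <;> assumption
    have := Fintype.card_range_le b
    simp only [Cardinal.mk_fintype, Fintype.card_fin, Nat.cast_le] at hle
    omega
  obtain ⟨g, hg, i, hi⟩ := Fintype.not_linearIndependent_iff.mp hdep
  refine ⟨g 0, g 1, g 2, ?_, by simpa [Fin.sum_univ_three] using hg⟩
  fin_cases i <;> simp_all

theorem ne_zero_of_smul_add_smul_add_smul_eq_zero {R M : Type*} [Ring R] [AddCommGroup M]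
    [Module R M] {x y z : M} {a b c : R} (hxy : LinearIndependent R ![x, y])
    (hxz : LinearIndependent R ![x, z]) (hyz : LinearIndependent R ![y, z])
    (habc : ¬(a = 0 ∧ b = 0 ∧ c = 0)) (h : a • x + b • y + c • z = 0) :
    a ≠ 0 ∧ b ≠ 0 ∧ c ≠ 0 := by
  have rest_eq_zero : ∀ {x y z : M} {a b c : R}, LinearIndependent R ![y, z] →
      a • x + b • y + c • z = 0 → a = 0 → b = 0 ∧ c = 0 := by
    rintro x y z a b c hyz h rfl
    exact LinearIndependent.pair_iff.mp hyz b c (by simpa using h)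
  refine ⟨fun ha => habc ⟨ha, rest_eq_zero hyz h ha⟩, fun hb => ?_, fun hc => ?_⟩
  · obtain ⟨ha, hc⟩ := rest_eq_zero (x := y) (a := b) hxz (by rw [← h]; abel) hb
    exact habc ⟨ha, hb, hc⟩
  · obtain ⟨ha, hb⟩ := rest_eq_zero (x := z) (a := c) hxy (by rw [← h]; abel) hc
    exact habc ⟨ha, hb, hc⟩

theorem mem_span_int_of_zsmul_add_zsmul_add_zsmul_eq_zero {K V : Type*} [DivisionRing K]
    [CharZero K] [AddCommGroup V] [Module K V] {n₀ n₁ n₂ : ℤ} {u₀ u₁ u₂ : V} (hn₂ : n₂ ≠ 0)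
    (h : n₀ • u₀ + n₁ • u₁ + n₂ • u₂ = 0) :
    let b := ![(n₂ : K)⁻¹ • u₀, (n₂ : K)⁻¹ • u₁]
    u₀ ∈ span ℤ (range b) ∧ u₁ ∈ span ℤ (range b) ∧ u₂ ∈ span ℤ (range b) := by
  intro b
  have hn₂' : (n₂ : K) ≠ 0 := Int.cast_ne_zero.mpr hn₂
  have hb₀ : b 0 ∈ span ℤ (range b) := subset_span ⟨0, rfl⟩
  have hb₁ : b 1 ∈ span ℤ (range b) := subset_span ⟨1, rfl⟩
  have hu : ∀ u : V, u = n₂ • ((n₂ : K)⁻¹ • u) := fun u => by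
    rw [← Int.cast_smul_eq_zsmul K, smul_inv_smul₀ hn₂']
  have hu₂ : u₂ = (-n₀) • b 0 + (-n₁) • b 1 := by
    have h₂ : (n₂ : K) • u₂ = -(n₀ • u₀ + n₁ • u₁) := by
      rw [Int.cast_smul_eq_zsmul]; exact eq_neg_of_add_eq_zero_right h
    simp only [b, Matrix.cons_val_zero, Matrix.cons_val_one, smul_comm _
      (n₂ : K)⁻¹, ← smul_add, neg_smul, ← neg_add, ← h₂, inv_smul_smul₀ hn₂']
  refine ⟨hu u₀ ▸ zsmul_mem hb₀ n₂, hu u₁ ▸ zsmul_mem hb₁ n₂, ?_⟩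
  rw [hu₂]
  exact add_mem (zsmul_mem hb₀ _) (zsmul_mem hb₁ _)

/-- Three pairwise linearly independent vectors in a 2-dimensional
real vector space lie in a common lattice (ℤ-span of an ℝ-basis) iff there are
nonzero integers `n₀, n₁, n₂` with `n₀•u₀ + n₁•u₁ + n₂•u₂ = 0`. -/
theorem stmt_0 (V : Type*) [AddCommGroup V] [Module ℝ V]
    (hdim : Module.finrank ℝ V = 2) (u₀ u₁ u₂ : V)
    (h01 : LinearIndependent ℝ ![u₀, u₁])
    (h02 : LinearIndependent ℝ ![u₀, u₂])
    (h12 : LinearIndependent ℝ ![u₁, u₂]) :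
    (∃ b : Module.Basis (Fin 2) ℝ V,
        u₀ ∈ Submodule.span ℤ (Set.range b) ∧
        u₁ ∈ Submodule.span ℤ (Set.range b) ∧
        u₂ ∈ Submodule.span ℤ (Set.range b)) ↔
    (∃ n₀ n₁ n₂ : ℤ, n₀ ≠ 0 ∧ n₁ ≠ 0 ∧ n₂ ≠ 0 ∧
        n₀ • u₀ + n₁ • u₁ + n₂ • u₂ = 0) := by
  constructor
  · rintro ⟨b, h₀, h₁, h₂⟩
    obtain ⟨n₀, n₁, n₂, hn, h⟩ := exists_int_relation_of_mem_span_int (by simp) b h₀ h₁ h₂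
    obtain ⟨hn₀, hn₁, hn₂⟩ := ne_zero_of_smul_add_smul_add_smul_eq_zero
      (h01.restrict_scalars' ℤ) (h02.restrict_scalars' ℤ) (h12.restrict_scalars' ℤ) hn h
    exact ⟨n₀, n₁, n₂, hn₀, hn₁, hn₂, h⟩
  · rintro ⟨n₀, n₁, n₂, -, -, hn₂, h⟩
    have hli : LinearIndependent ℝ ![(n₂ : ℝ)⁻¹ • u₀, (n₂ : ℝ)⁻¹ • u₁] := by
      convert h01.units_smul fun _ => Units.mk0 _ (inv_ne_zero (Int.cast_ne_zero.mpr hn₂))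
      ext i; fin_cases i <;> rfl
    refine ⟨basisOfLinearIndependentOfCardEqFinrank hli (by simp [hdim]), ?_⟩
    rw [coe_basisOfLinearIndependentOfCardEqFinrank]
    exact mem_span_int_of_zsmul_add_zsmul_add_zsmul_eq_zero hn₂ h
end

section
/- Let δ₁, δ₂, δ₃, δ₄ be four pairwise distinct lines through the origin in ℝ². There exists a lattice Λ ⊂ ℝ² intersecting each δᵢ nontrivially if and only if the cross-ratio of the four corresponding points of ℝP¹ is rational. -/
/-!
Both rescaling the four vectors and an invertible linear change of coordinates multiply the
numerator and the denominator of the cross-ratio by the same nonzero factor, so they leave it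
unchanged. If each line contains a nonzero point of a lattice, rescale the vectors to these
points: in lattice coordinates they are integer vectors, so the cross-ratio is rational.
Conversely, write `v 2 = a₂ v 0 + c₂ v 1` and `v 3 = a₃ v 0 + c₃ v 1`, so that the cross-ratio
is `q = c₂ a₃ / (c₃ a₂)`. For `e₀ = a₂ c₃ v 0` and `e₁ = c₂ c₃ v 1`, the lattice `ℤ e₀ + ℤ e₁`
contains `e₀`, `e₁`, `c₃ v 2 = e₀ + e₁` and `q.den c₂ v 3 = q.num e₀ + q.den e₁`.
-/

/-- Cross-ratio of four points of ℝP¹ given by representatives in ℝ² \ {0}. -/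
noncomputable def crossRatio (P₁ P₂ P₃ P₄ : ℝ × ℝ) : ℝ :=
  ((P₁.1 * P₃.2 - P₁.2 * P₃.1) * (P₂.1 * P₄.2 - P₂.2 * P₄.1)) /
  ((P₁.1 * P₄.2 - P₁.2 * P₄.1) * (P₂.1 * P₃.2 - P₂.2 * P₃.1))

section CommRing

variable {K : Type*} [CommRing K]

def wedge (u w : K × K) : K := u.1 * w.2 - u.2 * w.1

theorem wedge_smul_add_smul (p r x y : K × K) :
    wedge (p.1 • x + p.2 • y) (r.1 • x + r.2 • y) = wedge p r * wedge x y := by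
  simp only [wedge, Prod.fst_add, Prod.snd_add, Prod.smul_fst, Prod.smul_snd, smul_eq_mul]
  ring

theorem wedge_smul_smul (a b : K) (x y : K × K) :
    wedge (a • x) (b • y) = a * b * wedge x y := by
  simp only [wedge, Prod.smul_fst, Prod.smul_snd, smul_eq_mul]
  ring

end CommRing

section Field

variable {K : Type*} [Field K]

theorem linearIndependent_pair_iff_wedge_ne_zero {x y : K × K} :
    LinearIndependent K ![x, y] ↔ wedge x y ≠ 0 := by
  have hcomp (s t : K) :
      s • x + t • y = 0 ↔ s * x.1 + t * y.1 = 0 ∧ s * x.2 + t * y.2 = 0 := by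
    simp only [Prod.ext_iff, Prod.fst_add, Prod.snd_add, Prod.smul_fst, Prod.smul_snd,
      smul_eq_mul, Prod.fst_zero, Prod.snd_zero]
  simp only [LinearIndependent.pair_iff, hcomp, wedge]
  constructor
  · intro h hxy
    obtain ⟨-, hx₂⟩ := h y.2 (-x.2) ⟨by linear_combination hxy, by ring⟩
    obtain ⟨-, hx₁⟩ := h y.1 (-x.1) ⟨by ring, by linear_combination -hxy⟩
    exact one_ne_zero (h 1 0 ⟨by linear_combination -hx₁, by linear_combination -hx₂⟩).1
  · rintro hxy s t ⟨h₁, h₂⟩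
    have hs : s * (x.1 * y.2 - x.2 * y.1) = 0 := by linear_combination y.2 * h₁ - y.1 * h₂
    have ht : t * (x.1 * y.2 - x.2 * y.1) = 0 := by linear_combination x.1 * h₂ - x.2 * h₁
    exact ⟨(mul_eq_zero.1 hs).resolve_right hxy, (mul_eq_zero.1 ht).resolve_right hxy⟩

theorem eq_wedge_div_smul_add_wedge_div_smul {x y : K × K} (hxy : wedge x y ≠ 0) (z : K × K) :
    z = (wedge z y / wedge x y) • x + (wedge x z / wedge x y) • y := by
  ext <;> simp only [Prod.fst_add, Prod.snd_add, Prod.smul_fst, Prod.smul_snd, smul_eq_mul] <;>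
    rw [div_mul_eq_mul_div, div_mul_eq_mul_div, ← add_div, eq_div_iff hxy, wedge, wedge,
      wedge] <;>
    ring

end Field

theorem crossRatio_eq_wedge (P₁ P₂ P₃ P₄ : ℝ × ℝ) :
    crossRatio P₁ P₂ P₃ P₄ = wedge P₁ P₃ * wedge P₂ P₄ / (wedge P₁ P₄ * wedge P₂ P₃) := rfl

theorem crossRatio_smul {a₁ a₂ a₃ a₄ : ℝ} (h₁ : a₁ ≠ 0) (h₂ : a₂ ≠ 0) (h₃ : a₃ ≠ 0)
    (h₄ : a₄ ≠ 0) (P₁ P₂ P₃ P₄ : ℝ × ℝ) :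
    crossRatio (a₁ • P₁) (a₂ • P₂) (a₃ • P₃) (a₄ • P₄) = crossRatio P₁ P₂ P₃ P₄ := by
  simp only [crossRatio_eq_wedge, wedge_smul_smul]
  calc _ = (a₁ * a₂ * a₃ * a₄) * (wedge P₁ P₃ * wedge P₂ P₄) /
        ((a₁ * a₂ * a₃ * a₄) * (wedge P₁ P₄ * wedge P₂ P₃)) := by ring
    _ = _ := mul_div_mul_left _ _ (by positivity)

theorem crossRatio_smul_add_smul {x y : ℝ × ℝ} (hxy : wedge x y ≠ 0) (p₁ p₂ p₃ p₄ : ℝ × ℝ) :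
    crossRatio (p₁.1 • x + p₁.2 • y) (p₂.1 • x + p₂.2 • y) (p₃.1 • x + p₃.2 • y)
      (p₄.1 • x + p₄.2 • y) = crossRatio p₁ p₂ p₃ p₄ := by
  simp only [crossRatio_eq_wedge, wedge_smul_add_smul]
  calc _ = (wedge p₁ p₃ * wedge p₂ p₄) * wedge x y ^ 2 /
        ((wedge p₁ p₄ * wedge p₂ p₃) * wedge x y ^ 2) := by ring
    _ = _ := mul_div_mul_right _ _ (pow_ne_zero 2 hxy)

theorem crossRatio_self_self_smul_add_smul {x y : ℝ × ℝ} (hxy : wedge x y ≠ 0)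
    (a c a' c' : ℝ) :
    crossRatio x y (a • x + c • y) (a' • x + c' • y) = c * a' / (c' * a) := by
  have h := crossRatio_smul_add_smul hxy (1, 0) (0, 1) (a, c) (a', c')
  simp only [one_smul, zero_smul, add_zero, zero_add] at h
  rw [h, crossRatio]
  ring

theorem wedge_mem_subfield {K : Subfield ℝ} {u w : ℝ × ℝ} (hu : u ∈ (K : Set ℝ) ×ˢ K)
    (hw : w ∈ (K : Set ℝ) ×ˢ K) : wedge u w ∈ K :=
  sub_mem (mul_mem hu.1 hw.2) (mul_mem hu.2 hw.1)

theorem crossRatio_mem_subfield {K : Subfield ℝ} {P₁ P₂ P₃ P₄ : ℝ × ℝ}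
    (h₁ : P₁ ∈ (K : Set ℝ) ×ˢ K) (h₂ : P₂ ∈ (K : Set ℝ) ×ˢ K) (h₃ : P₃ ∈ (K : Set ℝ) ×ˢ K)
    (h₄ : P₄ ∈ (K : Set ℝ) ×ˢ K) : crossRatio P₁ P₂ P₃ P₄ ∈ K :=
  div_mem (mul_mem (wedge_mem_subfield h₁ h₃) (wedge_mem_subfield h₂ h₄))
    (mul_mem (wedge_mem_subfield h₁ h₄) (wedge_mem_subfield h₂ h₃))

theorem exists_mem_ne_zero_mem_span_singleton_iff {K V : Type*} [Field K] [AddCommGroup V]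
    [Module K V] {p : V → Prop} {v : V} (hv : v ≠ 0) :
    (∃ w, p w ∧ w ≠ 0 ∧ w ∈ K ∙ v) ↔ ∃ t : K, t ≠ 0 ∧ p (t • v) := by
  constructor
  · rintro ⟨w, hw, hw0, hwv⟩
    obtain ⟨t, rfl⟩ := Submodule.mem_span_singleton.1 hwv
    exact ⟨t, by rintro rfl; exact hw0 (zero_smul K v), hw⟩
  · rintro ⟨t, ht, hp⟩
    exact ⟨t • v, hp, smul_ne_zero ht hv,
      Submodule.smul_mem _ t (Submodule.mem_span_singleton_self v)⟩

theorem exists_rat_crossRatio_eq_of_mem_span_int {e : Fin 2 → ℝ × ℝ}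
    (he : wedge (e 0) (e 1) ≠ 0) {w : Fin 4 → ℝ × ℝ}
    (hw : ∀ i, w i ∈ Submodule.span ℤ (Set.range e)) :
    ∃ q : ℚ, crossRatio (w 0) (w 1) (w 2) (w 3) = q := by
  choose m hm using fun i => (Submodule.mem_span_range_iff_exists_fun ℤ).1 (hw i)
  have hw' : ∀ i,
      w i = ((m i 0 : ℝ), (m i 1 : ℝ)).1 • e 0 + ((m i 0 : ℝ), (m i 1 : ℝ)).2 • e 1 := fun i => by
    simp only [← hm i, Fin.sum_univ_two, Int.cast_smul_eq_zsmul]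
  have hrat : ∀ i, ((m i 0 : ℝ), (m i 1 : ℝ)) ∈ ((Rat.castHom ℝ).fieldRange : Set ℝ) ×ˢ
      (Rat.castHom ℝ).fieldRange := fun i => ⟨⟨m i 0, by simp⟩, ⟨m i 1, by simp⟩⟩
  obtain ⟨q, hq⟩ := RingHom.mem_fieldRange.1 <|
    crossRatio_mem_subfield (hrat 0) (hrat 1) (hrat 2) (hrat 3)
  rw [hw' 0, hw' 1, hw' 2, hw' 3, crossRatio_smul_add_smul he]
  exact ⟨q, hq.symm⟩

theorem exists_basis_smul_mem_span_int_of_crossRatio_eq_ratCast {v : Fin 4 → ℝ × ℝ}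
    (hdist : ∀ i j, i ≠ j → wedge (v i) (v j) ≠ 0) {q : ℚ}
    (hq : crossRatio (v 0) (v 1) (v 2) (v 3) = q) :
    ∃ b : Module.Basis (Fin 2) ℝ (ℝ × ℝ), ∀ i, ∃ t : ℝ, t ≠ 0 ∧
      t • v i ∈ Submodule.span ℤ (Set.range b) := by
  have hW : wedge (v 0) (v 1) ≠ 0 := hdist 0 1 (by decide)
  set a : Fin 4 → ℝ := fun i => wedge (v i) (v 1) / wedge (v 0) (v 1)
  set c : Fin 4 → ℝ := fun i => wedge (v 0) (v i) / wedge (v 0) (v 1)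
  have hv : ∀ i, v i = a i • v 0 + c i • v 1 :=
    fun i => eq_wedge_div_smul_add_wedge_div_smul hW (v i)
  have ha₂ : a 2 ≠ 0 := div_ne_zero (hdist 2 1 (by decide)) hW
  have hc₂ : c 2 ≠ 0 := div_ne_zero (hdist 0 2 (by decide)) hW
  have hc₃ : c 3 ≠ 0 := div_ne_zero (hdist 0 3 (by decide)) hW
  have hnum : (q.den : ℝ) * (c 2 * a 3) = q.num * (a 2 * c 3) := by
    have hcr : (q : ℝ) = c 2 * a 3 / (c 3 * a 2) := by
      rw [← hq, hv 2, hv 3, crossRatio_self_self_smul_add_smul hW]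
    have hq_num : (q.num : ℝ) = q * q.den := by exact_mod_cast (Rat.mul_den_eq_num q).symm
    rw [hq_num, hcr]
    field_simp
  set e : Fin 2 → ℝ × ℝ := ![(a 2 * c 3) • v 0, (c 2 * c 3) • v 1]
  have he : LinearIndependent ℝ e := by
    refine linearIndependent_pair_iff_wedge_ne_zero.2 ?_
    rw [wedge_smul_smul]
    exact mul_ne_zero (mul_ne_zero (mul_ne_zero ha₂ hc₃) (mul_ne_zero hc₂ hc₃)) hW
  set b := basisOfLinearIndependentOfCardEqFinrank he (by simp)
  have hb (k : Fin 2) : e k ∈ Submodule.span ℤ (Set.range b) :=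
    Submodule.subset_span ⟨k, by rw [coe_basisOfLinearIndependentOfCardEqFinrank]⟩
  refine ⟨b, fun i => ?_⟩
  fin_cases i
  · exact ⟨a 2 * c 3, mul_ne_zero ha₂ hc₃, hb 0⟩
  · exact ⟨c 2 * c 3, mul_ne_zero hc₂ hc₃, hb 1⟩
  · refine ⟨c 3, hc₃, ?_⟩
    have : c 3 • v 2 = (a 2 * c 3) • v 0 + (c 2 * c 3) • v 1 := by
      rw [hv 2]
      module
    exact this ▸ add_mem (hb 0) (hb 1)
  · refine ⟨q.den * c 2, mul_ne_zero (by positivity) hc₂, ?_⟩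
    have : ((q.den : ℝ) * c 2) • v 3 =
        q.num • ((a 2 * c 3) • v 0) + q.den • ((c 2 * c 3) • v 1) := by
      rw [hv 3]
      linear_combination (norm := module) hnum • v 0
    exact this ▸ add_mem (zsmul_mem (hb 0) _) (nsmul_mem (hb 1) _)

/-- Four pairwise distinct lines through the origin of ℝ²
(spanned by nonzero vectors `v i`) all meet a common lattice nontrivially
iff the cross-ratio of the corresponding points of ℝP¹ is rational. -/
theorem stmt_2 (v : Fin 4 → ℝ × ℝ) (hne : ∀ i, v i ≠ 0)
    (hdist : ∀ i j, i ≠ j → (v i).1 * (v j).2 - (v i).2 * (v j).1 ≠ 0) :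
    (∃ b : Module.Basis (Fin 2) ℝ (ℝ × ℝ), ∀ i, ∃ w : ℝ × ℝ,
        w ∈ Submodule.span ℤ (Set.range b) ∧ w ≠ 0 ∧
        w ∈ Submodule.span ℝ {v i}) ↔
    (∃ q : ℚ, crossRatio (v 0) (v 1) (v 2) (v 3) = (q : ℝ)) := by
  simp only [exists_mem_ne_zero_mem_span_singleton_iff (hne _)]
  constructor
  · rintro ⟨b, hb⟩
    choose t ht hmem using hb
    have hpair : ![b 0, b 1] = ⇑b := by
      ext i : 1
      fin_cases i <;> rfl
    have hb : wedge (b 0) (b 1) ≠ 0 :=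
      linearIndependent_pair_iff_wedge_ne_zero.1 (hpair ▸ b.linearIndependent)
    rw [← crossRatio_smul (ht 0) (ht 1) (ht 2) (ht 3)]
    exact exists_rat_crossRatio_eq_of_mem_span_int hb hmem
  · rintro ⟨q, hq⟩
    exact exists_basis_smul_mem_span_int_of_crossRatio_eq_ratCast hdist hq
end

section
/- Every convex quadrilateral in ℝ² is affinely equivalent to the convex hull Δ'_{(a,b)} of (0,0), (1,0), (a,b), (0,1) for a unique pair (a,b) with a > 0, b > 0, b ≤ 1 ≤ a, and a + b ≥ 2. -/
/-!
Send three vertices of the quadrilateral to `(0,0)`, `(1,0)`, `(0,1)` by an affine map; the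
fourth vertex then lands at the point `(a, b)` of its coordinates in that frame. Relabelling the
vertices acts on `(a, b)` by explicit birational maps. Since all four vertices are extreme, a
suitable relabelling puts `(a, b)` in convex position (`a, b > 0`, `a + b > 1`), and one of the
eight symmetries of the quadrilateral then achieves `b ≤ 1 ≤ a`, `a + b ≥ 2`.

For uniqueness, an affine equivalence between two normal forms maps extreme points to extreme
points, i.e. vertices to vertices, so `(a, b)` is the coordinate pair of a vertex of
`Δ'_{(c,d)}` in a frame made of the other three; of the 24 pairs arising this way, only `(c, d)`
itself is normalized.
-/

/-- The normal-form quadrilateral: the convex hull of (0,0), (1,0), (a,b), (0,1). -/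
noncomputable def normalForm (a b : ℝ) : Set (ℝ × ℝ) :=
  convexHull ℝ {((0:ℝ), (0:ℝ)), (1, 0), (a, b), (0, 1)}

open Set Function

section Relabel

variable {𝕜 E : Type*} [Field 𝕜] [AddCommGroup E] [Module 𝕜 E]

/-- `(a, b)` are the coordinates of `t 2` in the affine frame `(t 0; t 1, t 3)`; this index order
matches the vertex order `(0,0), (1,0), (a,b), (0,1)` of `normalForm a b`. -/
def QuadCoords (t : Fin 4 → E) (a b : 𝕜) : Prop :=
  t 2 - t 0 = a • (t 1 - t 0) + b • (t 3 - t 0)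

variable {t : Fin 4 → E} {a b : 𝕜}

theorem QuadCoords.swap_one_three (h : QuadCoords t a b) :
    QuadCoords (t ∘ Equiv.swap 1 3) b a := by
  change t 2 - t 0 = b • (t 3 - t 0) + a • (t 1 - t 0)
  rw [h, add_comm]

theorem QuadCoords.swap_two_three (h : QuadCoords t a b) (hb : b ≠ 0) :
    QuadCoords (t ∘ Equiv.swap 2 3) (-a / b) (1 / b) := by
  change t 3 - t 0 = (-a / b) • (t 1 - t 0) + (1 / b) • (t 2 - t 0)
  rw [h]
  match_scalars <;> field_simp <;> ring

theorem QuadCoords.swap_zero_two (h : QuadCoords t a b) (hab : a + b - 1 ≠ 0) :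
    QuadCoords (t ∘ Equiv.swap 0 2) (a / (a + b - 1)) (b / (a + b - 1)) := by
  change t 0 - t 2 = (a / (a + b - 1)) • (t 1 - t 2) + (b / (a + b - 1)) • (t 3 - t 2)
  rw [sub_eq_iff_eq_add.1 h]
  match_scalars <;> field_simp <;> ring

theorem QuadCoords.swap_zero_one_swap_two_three (h : QuadCoords t a b) (hb : b ≠ 0) :
    QuadCoords (t ∘ (Equiv.swap 0 1 * Equiv.swap 2 3 : Equiv.Perm (Fin 4)))
      ((a + b - 1) / b) (1 / b) := by
  change t 3 - t 1 = ((a + b - 1) / b) • (t 0 - t 1) + (1 / b) • (t 2 - t 1)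
  rw [sub_eq_iff_eq_add.1 h]
  match_scalars <;> field_simp <;> ring

theorem QuadCoords.map {F : Type*} [AddCommGroup F] [Module 𝕜 F] (h : QuadCoords t a b)
    (f : E →ᵃ[𝕜] F) : QuadCoords (f ∘ t) a b := by
  have hf : ∀ i j, f (t i) - f (t j) = f.linear (t i - t j) := fun i j =>
    (f.linearMap_vsub _ _).symm
  simp only [QuadCoords, comp_apply, hf]
  rw [h, map_add, map_smul, map_smul]

end Relabel

section ConvexPosition

variable {𝕜 E : Type*} [Field 𝕜] [LinearOrder 𝕜] [IsStrictOrderedRing 𝕜]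
  [AddCommGroup E] [Module 𝕜 E]

theorem ConvexIndependent.smul_ne_add {ι : Type*} {t : ι → E} (ht : ConvexIndependent 𝕜 t)
    {i j k l : ι} (hi : i ∉ ({j, k, l} : Set ι)) {β γ δ : 𝕜} (hβ : 0 ≤ β) (hγ : 0 ≤ γ)
    (hδ : 0 ≤ δ) (hpos : 0 < β + γ + δ) :
    (β + γ + δ) • t i ≠ β • t j + γ • t k + δ • t l := by
  intro h
  refine hi (ht _ _ ?_)
  have hw : ∀ x ∈ (Finset.univ : Finset (Fin 3)), 0 ≤ ![β, γ, δ] x := by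
    intro x _; fin_cases x <;> assumption
  have hmem : ∀ x ∈ (Finset.univ : Finset (Fin 3)), ![t j, t k, t l] x ∈ t '' {j, k, l} := by
    intro x _; fin_cases x <;> simp
  convert Finset.centerMass_mem_convexHull _ hw (by simpa [Fin.sum_univ_three]) hmem
  rw [Finset.centerMass, ← inv_smul_smul₀ hpos.ne' (t i)]
  simp [Fin.sum_univ_three, h]

variable {t : Fin 4 → E} {a b : 𝕜}

/-- In every other region cut out by the lines `a = 0`, `b = 0`, `a + b = 1`, one vertex lies in
the triangle of the other three. -/
theorem QuadCoords.trichotomy (ht : ConvexIndependent 𝕜 t) (h : QuadCoords t a b) :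
    (0 < a ∧ 0 < b ∧ 1 < a + b) ∨ (a < 0 ∧ 0 < b ∧ a + b < 1) ∨
      (0 < a ∧ b < 0 ∧ a + b < 1) := by
  have h2 : t 2 = a • (t 1 - t 0) + b • (t 3 - t 0) + t 0 := sub_eq_iff_eq_add.1 h
  have h₂ : 0 ≤ a → 0 ≤ b → 1 < a + b := by
    intro ha hb
    by_contra! hab
    have : (1 - a - b + a + b) • t 2 = (1 - a - b) • t 0 + a • t 1 + b • t 3 := by
      rw [h2]; module
    exact ht.smul_ne_add (by decide) (by linarith) ha hb (by linarith) this
  have h₀ : a ≤ 0 → 0 < b := by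
    intro ha
    by_contra! hb
    have : (1 + -a + -b) • t 0 = (1 : 𝕜) • t 2 + (-a) • t 1 + (-b) • t 3 := by
      rw [h2]; module
    exact ht.smul_ne_add (by decide) zero_le_one (by linarith) (by linarith) (by linarith) this
  have h₃ : a ≤ 0 → a + b < 1 := by
    intro ha
    by_contra! hab
    have : (a + b - 1 + -a + 1) • t 3 = (a + b - 1) • t 0 + (-a) • t 1 + (1 : 𝕜) • t 2 := by
      rw [h2]; module
    exact ht.smul_ne_add (by decide) (by linarith) (by linarith) zero_le_one (by linarith) this
  have h₁ : b ≤ 0 → a + b < 1 := by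
    intro hb
    by_contra! hab
    have : (a + b - 1 + 1 + -b) • t 1 = (a + b - 1) • t 0 + (1 : 𝕜) • t 2 + (-b) • t 3 := by
      rw [h2]; module
    exact ht.smul_ne_add (by decide) (by linarith) zero_le_one (by linarith) (by linarith) this
  rcases lt_trichotomy a 0 with ha | rfl | ha
  · exact Or.inr (Or.inl ⟨ha, h₀ ha.le, h₃ ha.le⟩)
  · linarith [h₀ le_rfl, h₃ le_rfl, h₂ le_rfl (h₀ le_rfl).le]
  rcases lt_trichotomy b 0 with hb | rfl | hb
  · exact Or.inr (Or.inr ⟨ha, hb, h₁ hb.le⟩)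
  · linarith [h₁ le_rfl, h₂ ha.le le_rfl]
  · exact Or.inl ⟨ha, hb, h₂ ha.le hb.le⟩

end ConvexPosition

section Normalize

variable {𝕜 E : Type*} [Field 𝕜] [LinearOrder 𝕜] [AddCommGroup E] [Module 𝕜 E]

def IsNormalPair (a b : 𝕜) : Prop :=
  0 < a ∧ 0 < b ∧ b ≤ 1 ∧ 1 ≤ a ∧ 2 ≤ a + b

variable (𝕜) in
def AdmitsNormalForm (t : Fin 4 → E) : Prop :=
  ∃ σ : Equiv.Perm (Fin 4), ∃ a b : 𝕜, QuadCoords (t ∘ σ) a b ∧ IsNormalPair a b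

variable {t : Fin 4 → E} {a b : 𝕜}

theorem AdmitsNormalForm.of_comp {σ : Equiv.Perm (Fin 4)} (h : AdmitsNormalForm 𝕜 (t ∘ σ)) :
    AdmitsNormalForm 𝕜 t := by
  obtain ⟨τ, a, b, hc, hn⟩ := h
  exact ⟨σ * τ, a, b, by rwa [Equiv.Perm.coe_mul, ← comp_assoc], hn⟩

variable [IsStrictOrderedRing 𝕜]

theorem QuadCoords.admitsNormalForm_of_pos (h : QuadCoords t a b) (ha : 0 < a) (hb : 0 < b)
    (hab : 1 < a + b) : AdmitsNormalForm 𝕜 t := by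
  wlog hba : b ≤ a generalizing t a b
  · exact (this h.swap_one_three hb ha (by linarith) (by linarith)).of_comp
  have hD : 0 < a + b - 1 := by linarith
  rcases le_total a 1 with ha1 | ha1
  · refine AdmitsNormalForm.of_comp ⟨Equiv.swap 1 3, 1 / b, (a + b - 1) / b,
      (h.swap_zero_one_swap_two_three hb.ne').swap_one_three, by positivity, by positivity,
      (div_le_one hb).2 (by linarith), (one_le_div hb).2 (by linarith), ?_⟩
    rw [← add_div, le_div_iff₀ hb]
    linarith
  rcases le_total 1 b with hb1 | hb1
  · refine ⟨Equiv.swap 0 1 * Equiv.swap 2 3, (a + b - 1) / b, 1 / b,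
      h.swap_zero_one_swap_two_three hb.ne', by positivity, by positivity,
      (div_le_one hb).2 hb1, (one_le_div hb).2 (by linarith), ?_⟩
    rw [← add_div, le_div_iff₀ hb]
    linarith
  rcases le_total 2 (a + b) with hab2 | hab2
  · exact ⟨1, a, b, h, ha, hb, hb1, ha1, hab2⟩
  · refine ⟨Equiv.swap 0 2, a / (a + b - 1), b / (a + b - 1), h.swap_zero_two hD.ne',
      by positivity, by positivity, (div_le_one hD).2 (by linarith),
      (one_le_div hD).2 (by linarith), ?_⟩
    rw [← add_div, le_div_iff₀ hD]
    linarith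

theorem QuadCoords.admitsNormalForm (ht : ConvexIndependent 𝕜 t) (h : QuadCoords t a b) :
    AdmitsNormalForm 𝕜 t := by
  rcases h.trichotomy ht with ⟨ha, hb, hab⟩ | ⟨ha, hb, hab⟩ | ⟨ha, hb, hab⟩
  · exact h.admitsNormalForm_of_pos ha hb hab
  · refine ((h.swap_two_three hb.ne').admitsNormalForm_of_pos (div_pos (by linarith) hb)
      (by positivity) ?_).of_comp
    rw [← add_div, lt_div_iff₀ hb]
    linarith
  · refine AdmitsNormalForm.of_comp (AdmitsNormalForm.of_comp
      ((h.swap_one_three.swap_two_three ha.ne').admitsNormalForm_of_pos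
        (div_pos (by linarith) ha) (by positivity) ?_))
    rw [← add_div, lt_div_iff₀ ha]
    linarith

end Normalize

section Frame

variable {k V : Type*} [Field k] [AddCommGroup V] [Module k V]

theorem exists_affineEquiv_frame (hV : Module.finrank k V = 2) {p₀ p₁ p₂ : V}
    (h : ¬Collinear k {p₀, p₁, p₂}) :
    ∃ e : V ≃ᵃ[k] k × k, e p₀ = (0, 0) ∧ e p₁ = (1, 0) ∧ e p₂ = (0, 1) := by
  have hli : LinearIndependent k ![p₁ -ᵥ p₀, p₂ -ᵥ p₀] := by
    have := ((affineIndependent_iff_linearIndependent_vsub k _ 0).1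
      (affineIndependent_iff_not_collinear_set.2 h)).comp
      (fun i : Fin 2 => ⟨i.succ, Fin.succ_ne_zero i⟩)
      (fun i j hij => Fin.succ_injective _ (congrArg Subtype.val hij))
    rwa [show _ ∘ _ = ![p₁ -ᵥ p₀, p₂ -ᵥ p₀] by ext i; fin_cases i <;> rfl] at this
  let b := basisOfLinearIndependentOfCardEqFinrank hli (by simp [hV])
  let L := b.equiv (Module.Basis.finTwoProd k) (Equiv.refl _)
  have hL : ∀ i, L (![p₁ -ᵥ p₀, p₂ -ᵥ p₀] i) = Module.Basis.finTwoProd k i := fun i => by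
    simpa [b] using b.equiv_apply i (Module.Basis.finTwoProd k) (Equiv.refl _)
  exact ⟨(AffineEquiv.vaddConst k p₀).symm.trans L.toAffineEquiv, by simp [Prod.mk_zero_zero],
    by simpa using hL 0, by simpa using hL 1⟩

theorem exists_quadCoords (hV : Module.finrank k V = 2) {t : Fin 4 → V}
    (h : ¬Collinear k {t 0, t 1, t 3}) : ∃ a b : k, QuadCoords t a b := by
  obtain ⟨e, h0, h1, h3⟩ := exists_affineEquiv_frame hV h
  refine ⟨(e (t 2)).1, (e (t 2)).2, ?_⟩
  have he : QuadCoords (e ∘ t) (e (t 2)).1 (e (t 2)).2 := by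
    ext <;> simp [h0, h1, h3]
  have hcomp : ⇑e.symm ∘ ⇑e ∘ t = t := funext fun i => e.symm_apply_apply (t i)
  simpa only [AffineEquiv.coe_toAffineMap, hcomp] using he.map e.symm.toAffineMap

end Frame

def normalVertices (a b : ℝ) : Fin 4 → ℝ × ℝ :=
  ![(0, 0), (1, 0), (a, b), (0, 1)]

theorem normalForm_eq_convexHull_range (a b : ℝ) :
    normalForm a b = convexHull ℝ (range (normalVertices a b)) := by
  rw [normalForm, normalVertices, Matrix.range_cons, Matrix.range_cons, Matrix.range_cons,
    Matrix.range_cons, Matrix.range_empty, union_empty, singleton_union, singleton_union,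
    singleton_union]

theorem quadCoords_normalVertices (a b : ℝ) : QuadCoords (normalVertices a b) a b := by
  ext <;> simp [normalVertices]

theorem QuadCoords.image_convexHull_range {t : Fin 4 → ℝ × ℝ} {a b : ℝ}
    (h : QuadCoords t a b) {e : (ℝ × ℝ) ≃ᵃ[ℝ] (ℝ × ℝ)} (h0 : e (t 0) = (0, 0))
    (h1 : e (t 1) = (1, 0)) (h3 : e (t 3) = (0, 1)) :
    e '' convexHull ℝ (range t) = normalForm a b := by
  have h2 : e (t 2) = (a, b) := by
    have := h.map e.toAffineMap
    simp only [QuadCoords, comp_apply, AffineEquiv.coe_toAffineMap, h0, h1, h3] at this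
    simpa [Prod.mk_zero_zero] using this
  have het : e ∘ t = normalVertices a b := by
    ext i : 1
    fin_cases i <;> simp [normalVertices, h0, h1, h2, h3]
  rw [normalForm_eq_convexHull_range, ← het, range_comp, ← e.coe_toAffineMap,
    AffineMap.image_convexHull]

theorem injective_of_not_collinear {k P : Type*} [Field k] [AddCommGroup P] [Module k P]
    {s : Fin 4 → P}
    (hcol : ∀ i j l : Fin 4, i ≠ j → i ≠ l → j ≠ l → ¬ Collinear k ({s i, s j, s l} : Set P)) :
    Injective s := by
  intro i j hij
  by_contra hne
  obtain ⟨l, hli, hlj⟩ : ∃ l, l ≠ i ∧ l ≠ j := by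
    have : ∀ i j : Fin 4, ∃ l, l ≠ i ∧ l ≠ j := by decide
    exact this i j
  apply hcol i j l hne hli.symm hlj.symm
  rw [hij, insert_eq_of_mem (mem_insert _ _)]
  exact collinear_pair k _ _

theorem convexIndependent_of_forall_mem_extremePoints {𝕜 E ι : Type*} [Field 𝕜] [LinearOrder 𝕜]
    [IsStrictOrderedRing 𝕜] [AddCommGroup E] [Module 𝕜 E] {p : ι → E} (hp : Injective p)
    (h : ∀ i, p i ∈ extremePoints 𝕜 (convexHull 𝕜 (range p))) : ConvexIndependent 𝕜 p :=
  hp.convexIndependent_iff_set.1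
    ((convex_convexHull 𝕜 _).convexIndependent_extremePoints.mono (range_subset_iff.2 h))

theorem exists_isNormalPair_image_eq_normalForm (s : Fin 4 → ℝ × ℝ)
    (hcol : ∀ i j k : Fin 4, i ≠ j → i ≠ k → j ≠ k →
        ¬ Collinear ℝ ({s i, s j, s k} : Set (ℝ × ℝ)))
    (hext : ∀ i, s i ∈ extremePoints ℝ (convexHull ℝ (range s))) :
    ∃ a b : ℝ, IsNormalPair a b ∧
      ∃ e : (ℝ × ℝ) ≃ᵃ[ℝ] (ℝ × ℝ), e '' convexHull ℝ (range s) = normalForm a b := by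
  have hrank : Module.finrank ℝ (ℝ × ℝ) = 2 := by simp
  obtain ⟨a, b, hc⟩ := exists_quadCoords hrank (hcol 0 1 3 (by decide) (by decide) (by decide))
  have hs := convexIndependent_of_forall_mem_extremePoints (injective_of_not_collinear hcol) hext
  obtain ⟨σ, a', b', hc', hn⟩ := hc.admitsNormalForm hs
  obtain ⟨e, h0, h1, h3⟩ := exists_affineEquiv_frame hrank
    (hcol (σ 0) (σ 1) (σ 3) (σ.injective.ne (by decide)) (σ.injective.ne (by decide))
      (σ.injective.ne (by decide)))
  refine ⟨a', b', hn, e, ?_⟩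
  rw [← hc'.image_convexHull_range h0 h1 h3, EquivLike.range_comp]

theorem AffineEquiv.image_extremePoints {𝕜 E F : Type*} [Ring 𝕜] [PartialOrder 𝕜]
    [IsOrderedRing 𝕜] [AddCommGroup E] [Module 𝕜 E] [AddCommGroup F] [Module 𝕜 F]
    (f : E ≃ᵃ[𝕜] F) (s : Set E) : f '' extremePoints 𝕜 s = extremePoints 𝕜 (f '' s) := by
  ext b
  obtain ⟨a, rfl⟩ := f.surjective b
  have : ∀ x y, f '' openSegment 𝕜 x y = openSegment 𝕜 (f x) (f y) :=
    image_openSegment _ f.toAffineMap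
  simp only [mem_extremePoints, f.surjective.forall, f.injective.mem_set_image,
    f.injective.eq_iff, ← this]

/-- By Krein–Milman, the convex hull of the extreme points is the whole hull, so no point of a
convex independent family can be missing from them. -/
theorem ConvexIndependent.extremePoints_convexHull_range {ι E : Type*} [Finite ι]
    [AddCommGroup E] [Module ℝ E] [TopologicalSpace E] [T2Space E] [IsTopologicalAddGroup E]
    [ContinuousSMul ℝ E] [LocallyConvexSpace ℝ E] {p : ι → E} (hp : ConvexIndependent ℝ p) :
    extremePoints ℝ (convexHull ℝ (range p)) = range p := by
  refine extremePoints_convexHull_subset.antisymm ?_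
  rintro _ ⟨i, rfl⟩
  set X := extremePoints ℝ (convexHull ℝ (range p))
  have hX : X ⊆ range p := extremePoints_convexHull_subset
  have hKM := closure_convexHull_extremePoints ((finite_range p).isCompact_convexHull ℝ)
    (convex_convexHull ℝ _)
  rw [(((finite_range p).subset hX).isClosed_convexHull ℝ).closure_eq] at hKM
  refine hp (p ⁻¹' X) i ?_
  rw [image_preimage_eq_of_subset hX, hKM]
  exact subset_convexHull ℝ _ (mem_range_self i)

theorem notMem_convexHull_of_lt {𝕜 E : Type*} [Field 𝕜] [LinearOrder 𝕜] [IsStrictOrderedRing 𝕜]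
    [AddCommGroup E] [Module 𝕜 E] {f : E → 𝕜} (hf : IsLinearMap 𝕜 f) {x : E} {s : Set E}
    (h : ∀ y ∈ s, f y < f x) : x ∉ convexHull 𝕜 s :=
  fun hx => lt_irrefl _ (convexHull_min h (convex_halfSpace_lt hf (f x)) hx)

theorem convexIndependent_normalVertices {a b : ℝ} (ha : 0 < a) (hb : 0 < b) (hab : 1 < a + b) :
    ConvexIndependent ℝ (normalVertices a b) := by
  let w : Fin 4 → ℝ × ℝ := ![(-1, -1), (b, -a), (1, 1), (-b, a)]
  have hlin : ∀ i, IsLinearMap ℝ fun z : ℝ × ℝ => (w i).1 * z.1 + (w i).2 * z.2 := fun i =>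
    ⟨fun x y => by simp only [Prod.fst_add, Prod.snd_add]; ring,
      fun c x => by simp only [Prod.smul_fst, Prod.smul_snd, smul_eq_mul]; ring⟩
  refine convexIndependent_iff_notMem_convexHull_sdiff.2 fun i s =>
    notMem_convexHull_of_lt (hlin i) ?_
  rintro _ ⟨j, hj, rfl⟩
  have hji : j ≠ i := hj.2
  fin_cases i <;> fin_cases j <;> simp_all [w, normalVertices] <;> nlinarith

set_option maxHeartbeats 1000000 in
theorem eq_of_quadCoords_normalVertices_comp {a b c d : ℝ} {τ : Fin 4 → Fin 4}
    (hτ : Injective τ) (h : QuadCoords (normalVertices c d ∘ τ) a b)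
    (hab : IsNormalPair a b) (hcd : IsNormalPair c d) : a = c ∧ b = d := by
  obtain ⟨ha, hb, hb1, ha1, hab2⟩ := hab
  obtain ⟨hc, hd, hd1, hc1, hcd2⟩ := hcd
  have h01 : τ 0 ≠ τ 1 := hτ.ne (by decide)
  have h02 : τ 0 ≠ τ 2 := hτ.ne (by decide)
  have h03 : τ 0 ≠ τ 3 := hτ.ne (by decide)
  have h12 : τ 1 ≠ τ 2 := hτ.ne (by decide)
  have h13 : τ 1 ≠ τ 3 := hτ.ne (by decide)
  have h23 : τ 2 ≠ τ 3 := hτ.ne (by decide)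
  simp only [QuadCoords, comp_apply] at h
  revert h h01 h02 h03 h12 h13 h23
  generalize τ 0 = i₀, τ 1 = i₁, τ 2 = i₂, τ 3 = i₃
  fin_cases i₀ <;> fin_cases i₁ <;> fin_cases i₂ <;> fin_cases i₃ <;>
    simp +decide [normalVertices, Prod.ext_iff] <;>
    intro h₁ h₂ <;> constructor <;> nlinarith

theorem eq_of_image_normalForm {a b c d : ℝ} (hab : IsNormalPair a b) (hcd : IsNormalPair c d)
    (f : (ℝ × ℝ) ≃ᵃ[ℝ] (ℝ × ℝ)) (hf : f '' normalForm a b = normalForm c d) : a = c ∧ b = d := by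
  have hv : ∀ {x y : ℝ}, IsNormalPair x y → ConvexIndependent ℝ (normalVertices x y) :=
    fun ⟨hx, hy, _, _, hxy⟩ => convexIndependent_normalVertices hx hy (by linarith)
  have hext : ∀ {x y : ℝ}, IsNormalPair x y →
      extremePoints ℝ (normalForm x y) = range (normalVertices x y) := fun h => by
    rw [normalForm_eq_convexHull_range, (hv h).extremePoints_convexHull_range]
  have hrange : range (f ∘ normalVertices a b) = range (normalVertices c d) := by
    rw [range_comp, ← hext hab, f.image_extremePoints, hf, hext hcd]
  choose τ hτ using fun i => hrange ▸ mem_range_self (f := f ∘ normalVertices a b) i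
  have hτinj : Injective τ := fun i j hij =>
    (hv hab).injective (f.injective (by simpa [hτ] using congrArg (normalVertices c d) hij))
  have hcoords := (quadCoords_normalVertices a b).map f.toAffineMap
  rw [show ⇑f.toAffineMap ∘ normalVertices a b = normalVertices c d ∘ τ from
    funext fun i => (hτ i).symm] at hcoords
  exact eq_of_quadCoords_normalVertices_comp hτinj hcoords hab hcd

/-- Every convex quadrilateral in ℝ² (convex hull of four points,
no three collinear, each an extreme point) is affinely equivalent to the
normal form `Δ'_{(a,b)}` for a unique pair `(a,b)` with `a > 0`, `b > 0`,
`b ≤ 1 ≤ a` and `a + b ≥ 2`. -/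
theorem stmt_6 (s : Fin 4 → ℝ × ℝ)
    (hcol : ∀ i j k : Fin 4, i ≠ j → i ≠ k → j ≠ k →
        ¬ Collinear ℝ ({s i, s j, s k} : Set (ℝ × ℝ)))
    (hext : ∀ i, s i ∈ Set.extremePoints ℝ (convexHull ℝ (Set.range s))) :
    ∃! p : ℝ × ℝ, 0 < p.1 ∧ 0 < p.2 ∧ p.2 ≤ 1 ∧ 1 ≤ p.1 ∧ 2 ≤ p.1 + p.2 ∧
      ∃ e : (ℝ × ℝ) ≃ᵃ[ℝ] (ℝ × ℝ),
        e '' convexHull ℝ (Set.range s) = normalForm p.1 p.2 := by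
  obtain ⟨a, b, hn, e, he⟩ := exists_isNormalPair_image_eq_normalForm s hcol hext
  refine ⟨(a, b), ⟨hn.1, hn.2.1, hn.2.2.1, hn.2.2.2.1, hn.2.2.2.2, e, he⟩, ?_⟩
  rintro ⟨c, d⟩ ⟨hc, hd, hd1, hc1, hcd, f, hf⟩
  have hg : (e.symm.trans f) '' normalForm a b = normalForm c d := by
    rw [AffineEquiv.coe_trans, image_comp, ← he, e.image_symm, preimage_image_eq _ e.injective,
      hf]
  obtain ⟨rfl, rfl⟩ := eq_of_image_normalForm hn ⟨hc, hd, hd1, hc1, hcd⟩ _ hg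
  rfl
end

section
/- Let Δ be a generic convex quadrilateral in ℝ² (no two edges parallel) given in normal form as the convex hull of (0,0), (1,0), (a,b), (0,1) with a,b > 0, a+b > 1, a ≠ 1, b ≠ 1. Then the affine map Φ*(v) = M v + (1,0) where M is the matrix with rows (1−b, a−1) and (1−b, 0), is invertible and maps Δ onto the orthotoric quadrilateral σ([α₁,α₂] × [β₁,β₂]) where σ(x,y) = (x+y, xy), α₁ = min{1,a}, α₂ = max{1,a}, β₁ = min{0,1−b}, β₂ = max{0,1−b}; moreover β₂ < α₁. -/
/-- The orthotoric map σ(x,y) = (x+y, xy). -/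
def sigOT (p : ℝ × ℝ) : ℝ × ℝ := (p.1 + p.2, p.1 * p.2)

lemma sig_rect (α₁ α₂ β₁ β₂ : ℝ) (h12 : α₁ ≤ α₂) (hb12 : β₁ ≤ β₂) (hba : β₂ < α₁) :
    sigOT '' (Set.Icc α₁ α₂ ×ˢ Set.Icc β₁ β₂) =
      convexHull ℝ ({sigOT (α₁,β₁), sigOT (α₂,β₁), sigOT (α₁,β₂), sigOT (α₂,β₂)} :
        Set (ℝ × ℝ)) := by
  set C : Set (ℝ × ℝ) := {sigOT (α₁,β₁), sigOT (α₂,β₁), sigOT (α₁,β₂), sigOT (α₂,β₂)}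
  have hc1 : sigOT (α₁,β₁) ∈ C := by simp [C]
  have hc2 : sigOT (α₂,β₁) ∈ C := by simp [C]
  have hc3 : sigOT (α₁,β₂) ∈ C := by simp [C]
  have hc4 : sigOT (α₂,β₂) ∈ C := by simp [C]
  apply Set.Subset.antisymm
  · -- image ⊆ hull
    rintro _ ⟨⟨x, y⟩, ⟨⟨hx1, hx2⟩, hy1, hy2⟩, rfl⟩
    have hxseg : x ∈ segment ℝ α₁ α₂ := by rw [segment_eq_Icc h12]; exact ⟨hx1, hx2⟩
    have hyseg : y ∈ segment ℝ β₁ β₂ := by rw [segment_eq_Icc hb12]; exact ⟨hy1, hy2⟩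
    obtain ⟨t₁, t₂, ht₁, ht₂, hts, htx⟩ := hxseg
    obtain ⟨u₁, u₂, hu₁, hu₂, hus, huy⟩ := hyseg
    simp only [smul_eq_mul] at htx huy
    have hb1' : sigOT (x, β₁) ∈ convexHull ℝ C := by
      have : sigOT (x, β₁) = t₁ • sigOT (α₁,β₁) + t₂ • sigOT (α₂,β₁) := by
        simp only [sigOT, Prod.smul_mk, Prod.mk_add_mk, smul_eq_mul, Prod.mk.injEq]
        exact ⟨by linear_combination -htx - β₁ * hts, by linear_combination -β₁ * htx⟩
      rw [this]
      exact (convex_convexHull ℝ C) (subset_convexHull ℝ C hc1)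
        (subset_convexHull ℝ C hc2) ht₁ ht₂ hts
    have hb2' : sigOT (x, β₂) ∈ convexHull ℝ C := by
      have : sigOT (x, β₂) = t₁ • sigOT (α₁,β₂) + t₂ • sigOT (α₂,β₂) := by
        simp only [sigOT, Prod.smul_mk, Prod.mk_add_mk, smul_eq_mul, Prod.mk.injEq]
        exact ⟨by linear_combination -htx - β₂ * hts, by linear_combination -β₂ * htx⟩
      rw [this]
      exact (convex_convexHull ℝ C) (subset_convexHull ℝ C hc3)
        (subset_convexHull ℝ C hc4) ht₁ ht₂ hts
    have : sigOT (x, y) = u₁ • sigOT (x, β₁) + u₂ • sigOT (x, β₂) := by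
      simp only [sigOT, Prod.smul_mk, Prod.mk_add_mk, smul_eq_mul, Prod.mk.injEq]
      exact ⟨by linear_combination -huy - x * hus, by linear_combination -x * huy⟩
    rw [this]
    exact (convex_convexHull ℝ C) hb1' hb2' hu₁ hu₂ hus
  · -- hull ⊆ image
    set T : Set (ℝ × ℝ) := {q : ℝ × ℝ |
      α₁^2 - q.1*α₁ + q.2 ≤ 0 ∧ β₂^2 - q.1*β₂ + q.2 ≤ 0 ∧
      0 ≤ α₂^2 - q.1*α₂ + q.2 ∧ 0 ≤ β₁^2 - q.1*β₁ + q.2} with hT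
    have hTconv : Convex ℝ T := by
      rintro p ⟨hp1, hp2, hp3, hp4⟩ q ⟨hq1, hq2, hq3, hq4⟩ u v hu hv huv
      obtain rfl : v = 1 - u := by linarith
      simp only [T, Set.mem_setOf_eq, Prod.fst_add, Prod.snd_add, Prod.smul_fst,
        Prod.smul_snd, smul_eq_mul]
      refine ⟨?_, ?_, ?_, ?_⟩
      · nlinarith [mul_nonpos_of_nonneg_of_nonpos hu hp1,
          mul_nonpos_of_nonneg_of_nonpos hv hq1]
      · nlinarith [mul_nonpos_of_nonneg_of_nonpos hu hp2,
          mul_nonpos_of_nonneg_of_nonpos hv hq2]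
      · nlinarith [mul_nonneg hu hp3, mul_nonneg hv hq3]
      · nlinarith [mul_nonneg hu hp4, mul_nonneg hv hq4]
    have hCsub : C ⊆ T := by
      have e1 : sigOT (α₁,β₁) ∈ T := by
        simp only [T, sigOT, Set.mem_setOf_eq]
        refine ⟨by nlinarith, by nlinarith, by nlinarith, by nlinarith⟩
      have e2 : sigOT (α₂,β₁) ∈ T := by
        simp only [T, sigOT, Set.mem_setOf_eq]
        refine ⟨by nlinarith, by nlinarith, by nlinarith, by nlinarith⟩
      have e3 : sigOT (α₁,β₂) ∈ T := by
        simp only [T, sigOT, Set.mem_setOf_eq]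
        refine ⟨by nlinarith, by nlinarith, by nlinarith, by nlinarith⟩
      have e4 : sigOT (α₂,β₂) ∈ T := by
        simp only [T, sigOT, Set.mem_setOf_eq]
        refine ⟨by nlinarith, by nlinarith, by nlinarith, by nlinarith⟩
      intro q hq
      rcases hq with rfl | rfl | rfl | rfl
      exacts [e1, e2, e3, e4]
    have hTsub : T ⊆ sigOT '' (Set.Icc α₁ α₂ ×ˢ Set.Icc β₁ β₂) := by
      rintro ⟨s, p⟩ ⟨h1, h2, h3, h4⟩
      simp only at h1 h2 h3 h4
      have hdisc : 0 ≤ s^2 - 4*p := by nlinarith [sq_nonneg (s - 2*α₁)]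
      set d := Real.sqrt (s^2 - 4*p) with hd
      have hd0 : 0 ≤ d := Real.sqrt_nonneg _
      have hd2 : d^2 = s^2 - 4*p := Real.sq_sqrt hdisc
      set x := (s + d)/2
      set y := (s - d)/2
      have hxy : x + y = s := by simp only [x, y]; ring
      have hprod : x * y = p := by
        have : x * y = (s^2 - d^2)/4 := by simp only [x, y]; ring
        rw [this, hd2]; ring
      have hyx : y ≤ x := by simp only [x, y]; linarith
      clear_value x y
      clear hd2 hd0 hd hdisc
      rw [← hxy, ← hprod] at h1 h2 h3 h4
      have hq1 : (α₁ - x) * (α₁ - y) ≤ 0 := by nlinarith [h1]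
      have hq2 : (β₂ - x) * (β₂ - y) ≤ 0 := by nlinarith [h2]
      have hq3 : 0 ≤ (α₂ - x) * (α₂ - y) := by nlinarith [h3]
      have hq4 : 0 ≤ (β₁ - x) * (β₁ - y) := by nlinarith [h4]
      have hx1 : α₁ ≤ x := by
        by_contra h
        push_neg at h
        have := mul_pos (by linarith : (0:ℝ) < α₁ - x) (by linarith : (0:ℝ) < α₁ - y)
        linarith
      have hy2 : y ≤ β₂ := by
        by_contra h
        push_neg at h
        have := mul_pos_of_neg_of_neg (by linarith : β₂ - x < 0) (by linarith : β₂ - y < 0)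
        linarith
      have hx2 : x ≤ α₂ := by
        by_contra h
        push_neg at h
        have := mul_neg_of_neg_of_pos (by linarith : α₂ - x < 0) (by linarith : 0 < α₂ - y)
        linarith
      have hy1 : β₁ ≤ y := by
        by_contra h
        push_neg at h
        have := mul_neg_of_neg_of_pos (by linarith : β₁ - x < 0) (by linarith : 0 < β₁ - y)
        linarith
      exact ⟨(x, y), ⟨⟨hx1, hx2⟩, hy1, hy2⟩, by simp [sigOT, hxy, hprod]⟩
    exact (convexHull_min hCsub hTconv).trans hTsub

/-- For a generic normal-form quadrilateral (a,b > 0, a+b > 1,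
a ≠ 1, b ≠ 1), the affine map Φ*(v) = Mv + (1,0), with M having rows
(1−b, a−1) and (1−b, 0), is invertible and maps the quadrilateral onto the
orthotoric quadrilateral σ([α₁,α₂]×[β₁,β₂]) with α₁ = min 1 a, α₂ = max 1 a,
β₁ = min 0 (1−b), β₂ = max 0 (1−b); moreover β₂ < α₁. -/
theorem stmt_8 (a b : ℝ) (ha : 0 < a) (hb : 0 < b) (hab : 1 < a + b)
    (ha1 : a ≠ 1) (hb1 : b ≠ 1) :
    Function.Bijective
      (fun p : ℝ × ℝ => ((1 - b) * p.1 + (a - 1) * p.2 + 1, (1 - b) * p.1)) ∧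
    (fun p : ℝ × ℝ => ((1 - b) * p.1 + (a - 1) * p.2 + 1, (1 - b) * p.1)) ''
        convexHull ℝ ({((0:ℝ), (0:ℝ)), (1, 0), (a, b), (0, 1)} : Set (ℝ × ℝ)) =
      sigOT '' (Set.Icc (min 1 a) (max 1 a) ×ˢ Set.Icc (min 0 (1 - b)) (max 0 (1 - b))) ∧
    max 0 (1 - b) < min 1 a := by
  have hb' : (1 : ℝ) - b ≠ 0 := sub_ne_zero.mpr (Ne.symm hb1)
  have ha' : a - 1 ≠ 0 := sub_ne_zero.mpr ha1
  set f : ℝ × ℝ → ℝ × ℝ :=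
    fun p : ℝ × ℝ => ((1 - b) * p.1 + (a - 1) * p.2 + 1, (1 - b) * p.1) with hf
  have hbij : Function.Bijective f := by
    apply Function.bijective_iff_has_inverse.mpr
    refine ⟨fun q => (q.2 / (1 - b), (q.1 - q.2 - 1) / (a - 1)), ?_, ?_⟩
    · intro p
      simp only [hf, Prod.ext_iff]
      constructor <;> field_simp <;> ring
    · intro q
      simp only [hf, Prod.ext_iff]
      constructor <;> field_simp <;> ring
  have hlt : max 0 (1 - b) < min 1 a :=
    max_lt (lt_min one_pos ha) (lt_min (by linarith) (by linarith))
  refine ⟨hbij, ?_, hlt⟩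
  -- express f as an affine map
  set L : ℝ × ℝ →ₗ[ℝ] ℝ × ℝ :=
    { toFun := fun p => ((1 - b) * p.1 + (a - 1) * p.2, (1 - b) * p.1)
      map_add' := by intro p q; simp [Prod.ext_iff]; constructor <;> ring
      map_smul' := by intro c p; simp [Prod.ext_iff]; constructor <;> ring }
  set F : ℝ × ℝ →ᵃ[ℝ] ℝ × ℝ :=
    { toFun := f
      linear := L
      map_vadd' := by
        intro p v
        simp only [hf, L, LinearMap.coe_mk, AddHom.coe_mk, vadd_eq_add, Prod.fst_add,
          Prod.snd_add, Prod.ext_iff, Prod.mk_add_mk]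
        constructor <;> ring }
  have hFf : (F : ℝ × ℝ → ℝ × ℝ) = f := rfl
  have himg : f '' convexHull ℝ ({((0:ℝ), (0:ℝ)), (1, 0), (a, b), (0, 1)} : Set (ℝ × ℝ)) =
      convexHull ℝ (f '' ({((0:ℝ), (0:ℝ)), (1, 0), (a, b), (0, 1)} : Set (ℝ × ℝ))) := by
    rw [← hFf, AffineMap.image_convexHull]
  rw [himg, sig_rect (min 1 a) (max 1 a) (min 0 (1 - b)) (max 0 (1 - b))
    (min_le_max) (min_le_max) hlt]
  congr 1
  have himgset : f '' ({((0:ℝ), (0:ℝ)), (1, 0), (a, b), (0, 1)} : Set (ℝ × ℝ)) =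
      {((1:ℝ), (0:ℝ)), (2 - b, 1 - b), (a + 1 - b, a * (1 - b)), (a, 0)} := by
    simp only [Set.image_insert_eq, Set.image_singleton, hf]
    norm_num
    rw [show (1 - b + 1 : ℝ) = 2 - b from by ring,
        show ((1 - b) * a + (a - 1) * b + 1 : ℝ) = a + 1 - b from by ring,
        show ((1 - b) * a : ℝ) = a * (1 - b) from by ring]
  rw [himgset]
  rcases lt_or_gt_of_ne ha1 with hA | hA <;> rcases lt_or_gt_of_ne hb1 with hB | hB
  · rw [min_eq_right hA.le, max_eq_left hA.le,
      min_eq_left (by linarith : (0:ℝ) ≤ 1 - b), max_eq_right (by linarith : (0:ℝ) ≤ 1 - b)]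
    simp only [sigOT]
    ext p
    simp only [Set.mem_insert_iff, Set.mem_singleton_iff, Prod.ext_iff]
    ring_nf
    constructor <;> rintro (h | h | h | h) <;> simp [h.1, h.2]
  · rw [min_eq_right hA.le, max_eq_left hA.le,
      min_eq_right (by linarith : (1:ℝ) - b ≤ 0), max_eq_left (by linarith : (1:ℝ) - b ≤ 0)]
    simp only [sigOT]
    ext p
    simp only [Set.mem_insert_iff, Set.mem_singleton_iff, Prod.ext_iff]
    ring_nf
    constructor <;> rintro (h | h | h | h) <;> simp [h.1, h.2]
  · rw [min_eq_left hA.le, max_eq_right hA.le,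
      min_eq_left (by linarith : (0:ℝ) ≤ 1 - b), max_eq_right (by linarith : (0:ℝ) ≤ 1 - b)]
    simp only [sigOT]
    ext p
    simp only [Set.mem_insert_iff, Set.mem_singleton_iff, Prod.ext_iff]
    ring_nf
    constructor <;> rintro (h | h | h | h) <;> simp [h.1, h.2]
  · rw [min_eq_left hA.le, max_eq_right hA.le,
      min_eq_right (by linarith : (1:ℝ) - b ≤ 0), max_eq_left (by linarith : (1:ℝ) - b ≤ 0)]
    simp only [sigOT]
    ext p
    simp only [Set.mem_insert_iff, Set.mem_singleton_iff, Prod.ext_iff]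
    ring_nf
    constructor <;> rintro (h | h | h | h) <;> simp [h.1, h.2]
end

section
/- Every trapezoid (convex quadrilateral with at least one pair of parallel edges) which is not a parallelogram is affinely equivalent to a Calabi trapezoid, i.e. to the image of a rectangle [1,α] × [0,1] (for some α > 1) under the map σ(x,y) = (x, xy). -/
/-!
Write the trapezoid as `ABCD` with `B - A = c • (C - D)`. Crossing diagonals force `c > 0`, and
`c ≠ 1` because it is not a parallelogram. An affine map sending `A, B, C` to
`(c y, 0), (c y, c y), (y, y)` sends `D` to `(y, 0)`; choosing `y = 1` or `y = c⁻¹` puts the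
shorter parallel side on the line `x = 1`. Finally the convex hull of
`(a, 0), (a, a), (b, b), (b, 0)` is `σ([a, b] × [0, 1])`, because `σ` maps `{x} × [0, 1]` onto
the segment from `(x, 0)` to `(x, x)`.
-/

def sigCal (p : ℝ × ℝ) : ℝ × ℝ := (p.1, p.1 * p.2)

open Set

def calabiVertices (a b : ℝ) : Set (ℝ × ℝ) := {(a, 0), (a, a), (b, b), (b, 0)}

lemma calabiVertices_comm (a b : ℝ) : calabiVertices a b = calabiVertices b a := by
  ext
  simp only [calabiVertices, mem_insert_iff, mem_singleton_iff]
  tauto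

lemma image_sigCal_Icc_prod_Icc {a b : ℝ} (ha : 0 < a) (hab : a ≤ b) :
    sigCal '' (Icc a b ×ˢ Icc 0 1) = convexHull ℝ (calabiVertices a b) := by
  have hconv := convex_convexHull ℝ (calabiVertices a b)
  have vert : ∀ p ∈ calabiVertices a b, p ∈ convexHull ℝ (calabiVertices a b) :=
    fun p hp => subset_convexHull ℝ _ hp
  apply Subset.antisymm
  · rintro _ ⟨⟨x, y⟩, ⟨hx, hy0, hy1⟩, rfl⟩
    obtain ⟨u, v, hu, hv, huv, rfl⟩ : x ∈ segment ℝ a b := segment_eq_Icc hab ▸ hx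
    have hbot : (u • a + v • b, (0 : ℝ)) ∈ convexHull ℝ (calabiVertices a b) :=
      hconv.segment_subset (vert (a, 0) (by simp [calabiVertices]))
        (vert (b, 0) (by simp [calabiVertices])) ⟨u, v, hu, hv, huv, by ext <;> simp⟩
    have htop : (u • a + v • b, u • a + v • b) ∈ convexHull ℝ (calabiVertices a b) :=
      hconv.segment_subset (vert (a, a) (by simp [calabiVertices]))
        (vert (b, b) (by simp [calabiVertices])) ⟨u, v, hu, hv, huv, by ext <;> simp⟩
    refine hconv.segment_subset hbot htop ⟨1 - y, y, by linarith, hy0, by ring, ?_⟩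
    ext <;> simp [sigCal] <;> ring
  · set S := {p : ℝ × ℝ | a ≤ p.1 ∧ p.1 ≤ b ∧ 0 ≤ p.2 ∧ p.2 ≤ p.1}
    have hS : Convex ℝ S := by
      rintro p ⟨hp1, hp2, hp3, hp4⟩ q ⟨hq1, hq2, hq3, hq4⟩ u v hu hv huv
      simp only [S, mem_ofPred_eq, Prod.fst_add, Prod.snd_add, Prod.smul_fst, Prod.smul_snd,
        smul_eq_mul]
      refine ⟨?_, ?_, ?_, ?_⟩ <;> nlinarith
    have hV : calabiVertices a b ⊆ S := by
      simp only [calabiVertices, insert_subset_iff, singleton_subset_iff, S, mem_ofPred_eq]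
      refine ⟨?_, ?_, ?_, ?_⟩ <;> refine ⟨?_, ?_, ?_, ?_⟩ <;> linarith
    refine (convexHull_min hV hS).trans ?_
    rintro ⟨x, t⟩ ⟨hx1, hx2, ht0, htx⟩
    have hx : 0 < x := ha.trans_le hx1
    exact ⟨(x, t / x), ⟨⟨hx1, hx2⟩, div_nonneg ht0 hx.le, div_le_one_of_le₀ htx hx.le⟩,
      by simp [sigCal, mul_div_cancel₀ t hx.ne']⟩

lemma linearIndependent_sub_of_not_collinear {k V : Type*} [Field k] [AddCommGroup V]
    [Module k V] {A B C : V} (h : ¬ Collinear k ({A, B, C} : Set V)) :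
    LinearIndependent k ![B - A, C - A] := by
  contrapose! h
  rw [linearIndependent_fin2] at h
  simp only [Matrix.cons_val_one, Matrix.cons_val_zero, not_and, not_forall, not_not] at h
  by_cases hCA : C = A
  · subst hCA
    exact collinear_insert_of_mem_affineSpan_pair (right_mem_affineSpan_pair k B C)
  · obtain ⟨r, hr⟩ := h (sub_ne_zero.2 hCA)
    have hB : B = AffineMap.lineMap A C r := by
      rw [AffineMap.lineMap_apply, vsub_eq_sub, vadd_eq_add, hr, sub_add_cancel]
    rw [insert_comm]
    exact collinear_insert_of_mem_affineSpan_pair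
      (hB ▸ AffineMap.lineMap_mem_affineSpan_pair r A C)

lemma exists_linearEquiv_apply_eq {K V ι : Type*} [DivisionRing K] [AddCommGroup V] [Module K V]
    [FiniteDimensional K V] [Fintype ι] {b b' : ι → V} (hb : LinearIndependent K b)
    (hb' : LinearIndependent K b') (hι : Fintype.card ι = Module.finrank K V) :
    ∃ f : V ≃ₗ[K] V, ∀ i, f (b i) = b' i := by
  let β := basisOfLinearIndependentOfCardEqFinrank' b hb hι
  let β' := basisOfLinearIndependentOfCardEqFinrank' b' hb' hι
  refine ⟨β.equiv β' (Equiv.refl ι), fun i => ?_⟩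
  simpa [β, β', coe_basisOfLinearIndependentOfCardEqFinrank'] using
    β.equiv_apply (i := i) (b' := β') (e := Equiv.refl ι)

lemma exists_affineEquiv_apply_eq {K V : Type*} [DivisionRing K] [AddCommGroup V] [Module K V]
    (hV : Module.finrank K V = 2) {A B C A' B' C' : V}
    (hli : LinearIndependent K ![B - A, C - A]) (hli' : LinearIndependent K ![B' - A', C' - A']) :
    ∃ e : V ≃ᵃ[K] V, e A = A' ∧ e B = B' ∧ e C = C' := by
  have : FiniteDimensional K V := Module.finite_of_finrank_eq_succ hV
  obtain ⟨f, hf⟩ := exists_linearEquiv_apply_eq hli hli' (by simp only [Fintype.card_fin, hV])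
  have hfB : f B = B' - A' + f A := by simpa [sub_eq_iff_eq_add] using hf 0
  have hfC : f C = C' - A' + f A := by simpa [sub_eq_iff_eq_add] using hf 1
  refine ⟨f.toAffineEquiv.trans (AffineEquiv.constVAdd K V (A' - f A)), ?_, ?_, ?_⟩ <;>
    simp [hfB, hfC]

lemma pos_of_sub_eq_smul_of_openSegment_inter {V : Type*} [AddCommGroup V] [Module ℝ V]
    {A B C D : V} {c : ℝ} (hli : LinearIndependent ℝ ![B - A, C - A])
    (hrel : B - A = c • (C - D)) (hcross : (openSegment ℝ A C ∩ openSegment ℝ B D).Nonempty) :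
    0 < c := by
  obtain ⟨p, ⟨a, b, ha, hb, hab, hp⟩, ⟨a', b', ha', hb', hab', hp'⟩⟩ := hcross
  -- eliminate `D` and `p`; independence then forces `c * a' = b'`
  have hrelation : (c * a' - b') • (B - A) + (c * b' - c * b) • (C - A) = 0 := by
    linear_combination (norm := module)
      c • hp' - c • hp - b' • hrel - hab' • (c • A) + hab • (c • A)
  have hca' : c * a' = b' := by linarith [(hli.eq_zero_of_pair hrelation).1]
  exact pos_of_mul_pos_left (hca' ▸ hb') ha'.le

lemma exists_affineEquiv_image_convexHull_eq_calabiVertices {A B C D : ℝ × ℝ} {c y : ℝ}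
    (hli : LinearIndependent ℝ ![B - A, C - A]) (hrel : B - A = c • (C - D)) (hc0 : c ≠ 0)
    (hc1 : c ≠ 1) (hy : y ≠ 0) :
    ∃ e : (ℝ × ℝ) ≃ᵃ[ℝ] (ℝ × ℝ),
      e '' convexHull ℝ {A, B, C, D} = convexHull ℝ (calabiVertices (c * y) y) := by
  have hli' : LinearIndependent ℝ
      ![((c * y, c * y) : ℝ × ℝ) - (c * y, 0), (y, y) - (c * y, 0)] := by
    rw [LinearIndependent.pair_iff]
    intro s t hst
    simp only [Prod.mk_sub_mk, sub_self, sub_zero, Prod.smul_mk, smul_eq_mul, Prod.mk_add_mk,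
      Prod.mk_eq_zero] at hst
    have ht : t = 0 := by
      have : t * (y * (1 - c)) = 0 := by linear_combination hst.1
      simpa [hy, sub_eq_zero, Ne.symm hc1] using this
    subst ht
    simpa [hc0, hy] using hst.2
  obtain ⟨e, hA, hB, hC⟩ := exists_affineEquiv_apply_eq (by simp) hli hli'
  have hD : e D = (y, 0) := by
    have h := congrArg (e : (ℝ × ℝ) →ᵃ[ℝ] (ℝ × ℝ)).linear hrel
    rw [map_smul, ← vsub_eq_sub, ← vsub_eq_sub, AffineMap.linearMap_vsub,
      AffineMap.linearMap_vsub] at h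
    simp only [AffineEquiv.coe_toAffineMap, hA, hB, hC, vsub_eq_sub, Prod.mk_sub_mk, sub_self,
      sub_zero, Prod.ext_iff, Prod.fst_sub, Prod.snd_sub, Prod.smul_fst, Prod.smul_snd,
      smul_eq_mul] at h
    ext
    · linarith [mul_left_cancel₀ hc0 (h.1.symm.trans (mul_zero c).symm)]
    · linarith [mul_left_cancel₀ hc0 h.2]
  refine ⟨e, ?_⟩
  rw [← AffineEquiv.coe_toAffineMap, AffineMap.image_convexHull]
  simp [image_insert_eq, hA, hB, hC, hD, calabiVertices]

lemma exists_affineEquiv_image_convexHull_eq_calabi {A B C D : ℝ × ℝ} {c : ℝ}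
    (hABC : ¬ Collinear ℝ ({A, B, C} : Set (ℝ × ℝ)))
    (hcross : (openSegment ℝ A C ∩ openSegment ℝ B D).Nonempty)
    (hrel : B - A = c • (C - D)) (hc1 : c ≠ 1) :
    ∃ α : ℝ, 1 < α ∧ ∃ e : (ℝ × ℝ) ≃ᵃ[ℝ] (ℝ × ℝ),
      e '' convexHull ℝ {A, B, C, D} = sigCal '' (Icc 1 α ×ˢ Icc 0 1) := by
  have hli := linearIndependent_sub_of_not_collinear hABC
  have hc := pos_of_sub_eq_smul_of_openSegment_inter hli hrel hcross
  rcases hc1.lt_or_gt with hlt | hgt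
  · have hα : 1 < c⁻¹ := one_lt_inv₀ hc |>.2 hlt
    obtain ⟨e, he⟩ := exists_affineEquiv_image_convexHull_eq_calabiVertices hli hrel hc.ne' hc1
      (inv_ne_zero hc.ne')
    refine ⟨c⁻¹, hα, e, ?_⟩
    rw [he, mul_inv_cancel₀ hc.ne', image_sigCal_Icc_prod_Icc one_pos hα.le]
  · obtain ⟨e, he⟩ := exists_affineEquiv_image_convexHull_eq_calabiVertices hli hrel hc.ne' hc1
      one_ne_zero
    refine ⟨c, hgt, e, ?_⟩
    rw [he, mul_one, calabiVertices_comm, image_sigCal_Icc_prod_Icc one_pos hgt.le]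

theorem stmt_9_general (s : Fin 4 → ℝ × ℝ)
    (hcol : ∀ i j k : Fin 4, i ≠ j → i ≠ k → j ≠ k →
        ¬ Collinear ℝ ({s i, s j, s k} : Set (ℝ × ℝ)))
    (hcyc : (openSegment ℝ (s 0) (s 2) ∩ openSegment ℝ (s 1) (s 3)).Nonempty)
    (htrap : (∃ c : ℝ, s 1 - s 0 = c • (s 2 - s 3)) ∨
             (∃ c : ℝ, s 2 - s 1 = c • (s 3 - s 0)))
    (hnpar : ¬ ((∃ c : ℝ, s 1 - s 0 = c • (s 2 - s 3)) ∧
                (∃ c : ℝ, s 2 - s 1 = c • (s 3 - s 0)))) :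
    ∃ α : ℝ, 1 < α ∧ ∃ e : (ℝ × ℝ) ≃ᵃ[ℝ] (ℝ × ℝ),
      e '' convexHull ℝ (Set.range s) =
        sigCal '' (Set.Icc 1 α ×ˢ Set.Icc 0 1) := by
  have hrange : ∀ p, p ∈ Set.range s ↔ p = s 0 ∨ p = s 1 ∨ p = s 2 ∨ p = s 3 := by
    simp [Fin.exists_fin_succ, eq_comm]
  rcases htrap with ⟨c, hrel⟩ | ⟨c, hrel⟩
  · have hc1 : c ≠ 1 := by
      rintro rfl
      rw [one_smul] at hrel
      exact hnpar ⟨⟨1, by rwa [one_smul]⟩,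
        ⟨1, by rw [one_smul]; exact sub_eq_sub_iff_sub_eq_sub.mpr hrel.symm⟩⟩
    rw [show Set.range s = {s 0, s 1, s 2, s 3} by ext; simp [hrange]]
    exact exists_affineEquiv_image_convexHull_eq_calabi (hcol 0 1 2 (by decide) (by decide)
      (by decide)) hcyc hrel hc1
  · have hc1 : c ≠ 1 := by
      rintro rfl
      rw [one_smul] at hrel
      exact hnpar ⟨⟨1, by rw [one_smul]; exact (sub_eq_sub_iff_sub_eq_sub.mp hrel).symm⟩,
        ⟨1, by rwa [one_smul]⟩⟩
    have hcross : (openSegment ℝ (s 1) (s 3) ∩ openSegment ℝ (s 2) (s 0)).Nonempty := by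
      rwa [inter_comm, openSegment_symm ℝ (s 2)]
    rw [show Set.range s = {s 1, s 2, s 3, s 0} by ext; simp [hrange]; tauto]
    exact exists_affineEquiv_image_convexHull_eq_calabi (hcol 1 2 3 (by decide) (by decide)
      (by decide)) hcross hrel hc1

/-- Every trapezoid (convex quadrilateral, vertices `s 0, s 1, s 2, s 3`
in cyclic order, with at least one pair of parallel opposite edges) which is not a
parallelogram is affinely equivalent to a Calabi trapezoid
σ([1,α]×[0,1]) with σ(x,y) = (x,xy) for some α > 1. -/
theorem stmt_9 (s : Fin 4 → ℝ × ℝ)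
    (hcol : ∀ i j k : Fin 4, i ≠ j → i ≠ k → j ≠ k →
        ¬ Collinear ℝ ({s i, s j, s k} : Set (ℝ × ℝ)))
    (hext : ∀ i, s i ∈ Set.extremePoints ℝ (convexHull ℝ (Set.range s)))
    (hcyc : (openSegment ℝ (s 0) (s 2) ∩ openSegment ℝ (s 1) (s 3)).Nonempty)
    (htrap : (∃ c : ℝ, s 1 - s 0 = c • (s 2 - s 3)) ∨
             (∃ c : ℝ, s 2 - s 1 = c • (s 3 - s 0)))
    (hnpar : ¬ ((∃ c : ℝ, s 1 - s 0 = c • (s 2 - s 3)) ∧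
                (∃ c : ℝ, s 2 - s 1 = c • (s 3 - s 0)))) :
    ∃ α : ℝ, 1 < α ∧ ∃ e : (ℝ × ℝ) ≃ᵃ[ℝ] (ℝ × ℝ),
      e '' convexHull ℝ (Set.range s) =
        sigCal '' (Set.Icc 1 α ×ˢ Set.Icc 0 1) :=
  stmt_9_general s hcol hcyc htrap hnpar
end

section
/- Fix reals 0 < β < 1 < α with α − β ≥ 1 and b < 0. Then there exists a₀ > 0 such that for all a > a₀: (a·D₂ − b·D₄)/(D₄ − D₃) > b²(α+1−β)/(2(a−b)β) + (a−b)β/(8(α+1−β)) − b, where D₂ = (1+α)² + 2 + β² − 2(2+α)β, D₃ = 3β² + (1+α)² + 2α − 4β(1+α), D₄ = β² + (1+α)² + 2α − 2β(1+α). -/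
/-- Claim 5.10: Fix 0 < β < 1 < α with α − β ≥ 1 and b < 0. Then
there exists a₀ > 0 such that for all a > a₀,
(a·D₂ − b·D₄)/(D₄ − D₃) > b²(α+1−β)/(2(a−b)β) + (a−b)β/(8(α+1−β)) − b. -/
theorem stmt_16 (α β b : ℝ) (hβ0 : 0 < β) (hβ1 : β < 1) (hα : 1 < α)
    (hαβ : 1 ≤ α - β) (hb : b < 0) :
    ∃ a₀ : ℝ, 0 < a₀ ∧ ∀ a : ℝ, a₀ < a →
      (a * ((1 + α) ^ 2 + 2 + β ^ 2 - 2 * (2 + α) * β)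
          - b * (β ^ 2 + (1 + α) ^ 2 + 2 * α - 2 * β * (1 + α))) /
        ((β ^ 2 + (1 + α) ^ 2 + 2 * α - 2 * β * (1 + α))
          - (3 * β ^ 2 + (1 + α) ^ 2 + 2 * α - 4 * β * (1 + α))) >
      b ^ 2 * (α + 1 - β) / (2 * (a - b) * β)
        + (a - b) * β / (8 * (α + 1 - β)) - b := by
  set C : ℝ := 4 * (α - β) ^ 2 + 8 * α + 12 - 16 * β - β ^ 2 with hC
  set B : ℝ := 8 * b * (1 - α - β) + 8 * b * β * (α + 1 - β) with hB
  set A : ℝ := -4 * b ^ 2 * (α + 1 - β) ^ 2 with hA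
  have hCpos : 0 < C := by nlinarith [sq_nonneg (α - β)]
  have hαβ1 : 0 < α + 1 - β := by linarith
  refine ⟨(1 + |B| + |A|) / C + 1, by positivity, fun a ha => ?_⟩
  have ht1 : (1 : ℝ) < a - b := by
    have : (0:ℝ) ≤ (1 + |B| + |A|) / C := by positivity
    linarith
  have htC : C + 1 + |B| + |A| < C * (a - b) := by
    have h1 : (1 + |B| + |A|) / C + 1 < a - b := by linarith
    have := (div_lt_iff₀ hCpos).mp (by linarith : (1 + |B| + |A|) / C < a - b - 1)
    nlinarith
  have ht0 : (0:ℝ) < a - b := by linarith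
  have hquad : 0 < C * (a - b) ^ 2 + B * (a - b) + A := by
    have h1 : C * (a - b) ^ 2 + B * (a - b) + A ≥
        (a - b) * (C * (a - b) - |B| - |A|) := by
      have hB' : B * (a - b) ≥ -|B| * (a - b) := by
        have := neg_abs_le B
        nlinarith
      have hA' : A ≥ -|A| * (a - b) := by
        have := neg_abs_le A
        nlinarith [abs_nonneg A]
      nlinarith
    nlinarith
  rw [gt_iff_lt, ← sub_pos]
  have hne1 : (2 : ℝ) * (a - b) * β ≠ 0 := by positivity
  have hne2 : (8 : ℝ) * (α + 1 - β) ≠ 0 := by positivity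
  have key : (a * ((1 + α) ^ 2 + 2 + β ^ 2 - 2 * (2 + α) * β)
          - b * (β ^ 2 + (1 + α) ^ 2 + 2 * α - 2 * β * (1 + α))) /
        ((β ^ 2 + (1 + α) ^ 2 + 2 * α - 2 * β * (1 + α))
          - (3 * β ^ 2 + (1 + α) ^ 2 + 2 * α - 4 * β * (1 + α))) -
      (b ^ 2 * (α + 1 - β) / (2 * (a - b) * β)
        + (a - b) * β / (8 * (α + 1 - β)) - b)
      = (C * (a - b) ^ 2 + B * (a - b) + A) / (8 * β * (α + 1 - β) * (a - b)) := by
    rw [hC, hB, hA]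
    have hden : (β ^ 2 + (1 + α) ^ 2 + 2 * α - 2 * β * (1 + α))
          - (3 * β ^ 2 + (1 + α) ^ 2 + 2 * α - 4 * β * (1 + α))
        = 2 * β * (α + 1 - β) := by ring
    rw [hden]
    field_simp
    ring
  rw [key]
  positivity
end
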